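/- arXiv:2210.15066 — 2 statements merged into one kernel-verified Lean document; each statement's English description precedes it below -/
import Mathlib

section
/- Define, for a large integer N, functions on ℤ² × ℝ by û_N(n,τ) = 1_{n = N e₁} · 1_{[-1,1]}(τ + N²) and v̂_N(n,τ) = 1_{n = -N e₁} · 1_{[-1,1]}(τ + N²), where e₁ = (1,0). Then the space-time Fourier transform of the product of complex conjugates satisfies 𝓕(ū_N v̄_N)(n,τ) ≥ 1_{n=0} · 1_{[-1,1]}(-τ + 2N²) pointwise. Consequently ‖⟨n⟩^s ⟨τ+|n|²⟩^{b-1} 𝓕(ū_N v̄_N)‖_{ℓ²_n L²_τ} ≳ N^{2b-2}, while ‖u_N‖_{X^{s,b}} ∼ N^s and ‖v_N‖_{X^{s,b}} ∼ N^s. -/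
open MeasureTheory

noncomputable def jap (n : ℤ × ℤ) : ℝ := Real.sqrt (1 + ((n.1 : ℝ) ^ 2 + (n.2 : ℝ) ^ 2))

noncomputable def nsq (n : ℤ × ℤ) : ℝ := (n.1 : ℝ) ^ 2 + (n.2 : ℝ) ^ 2

noncomputable def jb (x : ℝ) : ℝ := Real.sqrt (1 + x ^ 2)

/-- The `X^{s,b}` norm of `û : ℤ² × ℝ → ℂ` (on the Fourier side). -/
noncomputable def Xnorm (s b : ℝ) (u : ℤ × ℤ → ℝ → ℂ) : ℝ :=
  Real.sqrt (∑' n : ℤ × ℤ, ∫ τ : ℝ, (jap n ^ s * jb (τ + nsq n) ^ b * ‖u n τ‖) ^ 2)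

/-- Fourier transform of the complex conjugate: `𝓕(ū)(n,τ) = conj û(-n,-τ)`. -/
noncomputable def conjFT (u : ℤ × ℤ → ℝ → ℂ) : ℤ × ℤ → ℝ → ℂ :=
  fun n τ => starRingEnd ℂ (u (-n) (-τ))

/-- Convolution on `ℤ² × ℝ` (Fourier transform of a product). -/
noncomputable def conv (u v : ℤ × ℤ → ℝ → ℂ) : ℤ × ℤ → ℝ → ℂ :=
  fun n τ => ∑' n₁ : ℤ × ℤ, ∫ τ₁ : ℝ, u n₁ τ₁ * v (n - n₁) (τ - τ₁)

/-- `û_N(n,τ) = 1_{n = N e₁} 1_{[-1,1]}(τ + N²)`. -/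
noncomputable def uN (N : ℕ) : ℤ × ℤ → ℝ → ℂ :=
  fun n τ => if n = ((N : ℤ), 0) then
    ((Set.indicator (Set.Icc (-1 : ℝ) 1) (fun _ => (1 : ℝ)) (τ + (N : ℝ) ^ 2) : ℝ) : ℂ)
  else 0

/-- `v̂_N(n,τ) = 1_{n = -N e₁} 1_{[-1,1]}(τ + N²)`. -/
noncomputable def vN (N : ℕ) : ℤ × ℤ → ℝ → ℂ :=
  fun n τ => if n = (-(N : ℤ), 0) then
    ((Set.indicator (Set.Icc (-1 : ℝ) 1) (fun _ => (1 : ℝ)) (τ + (N : ℝ) ^ 2) : ℝ) : ℂ)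
  else 0

/-!
`û_N` and `v̂_N` are single spatial modes `±N e₁` carrying the same time profile, and conjugation
and convolution act on single modes by negating and adding frequencies. Hence `𝓕(ū_N v̄_N)` lives
at the frequency `0`, with time profile the self-convolution of `1_{[-1,1]}` centred at `2N²`: the
tent `max (2 - |2N² - τ|) 0`. On `|τ - 2N²| ≤ 1` the tent is at least `1` and `⟨τ⟩ ≈ N²`, which
gives the lower bound `N^{2b-2}`. By translation invariance in `τ`, the `X^{s,b}` norms of `u_N`
and `v_N` are `⟨N⟩^s` times a constant independent of `N`.
-/

open Set

lemma rpow_mem_Icc_of_le_of_le_mul {x y c : ℝ} (r : ℝ) (hx : 0 < x) (hc : 1 ≤ c)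
    (hxy : x ≤ y) (hyx : y ≤ c * x) :
    y ^ r ∈ Icc (min 1 (c ^ r) * x ^ r) (max 1 (c ^ r) * x ^ r) := by
  have hy : 0 < y := hx.trans_le hxy
  have hcx : (c * x) ^ r = c ^ r * x ^ r := Real.mul_rpow (by linarith) hx.le
  rcases le_or_gt 0 r with hr | hr
  · refine ⟨?_, ?_⟩
    · calc min 1 (c ^ r) * x ^ r ≤ 1 * x ^ r := by gcongr; exact min_le_left _ _
        _ ≤ y ^ r := by rw [one_mul]; exact Real.rpow_le_rpow hx.le hxy hr
    · calc y ^ r ≤ (c * x) ^ r := Real.rpow_le_rpow hy.le hyx hr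
        _ ≤ max 1 (c ^ r) * x ^ r := by rw [hcx]; gcongr; exact le_max_right _ _
  · refine ⟨?_, ?_⟩
    · calc min 1 (c ^ r) * x ^ r ≤ (c * x) ^ r := by rw [hcx]; gcongr; exact min_le_right _ _
        _ ≤ y ^ r := Real.rpow_le_rpow_of_nonpos hy hyx hr.le
    · calc y ^ r ≤ 1 * x ^ r := by rw [one_mul]; exact Real.rpow_le_rpow_of_nonpos hx hxy hr.le
        _ ≤ max 1 (c ^ r) * x ^ r := by gcongr; exact le_max_left _ _

lemma integral_indicator_Icc_mul_indicator_Icc_sub (t : ℝ) :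
    ∫ x, (Icc (-1 : ℝ) 1).indicator (fun _ => (1 : ℝ)) x
        * (Icc (-1 : ℝ) 1).indicator (fun _ => (1 : ℝ)) (t - x) = max (2 - |t|) 0 := by
  have hshift : ∀ x, (Icc (-1 : ℝ) 1).indicator (fun _ => (1 : ℝ)) (t - x)
      = (Icc (t - 1) (t + 1)).indicator (fun _ => (1 : ℝ)) x := by
    intro x
    simp only [indicator_apply, mem_Icc]
    congr 1
    exact propext ⟨fun h => ⟨by linarith, by linarith⟩, fun h => ⟨by linarith, by linarith⟩⟩
  simp_rw [hshift, ← inter_indicator_mul, one_mul]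
  rw [Icc_inter_Icc, integral_indicator_const _ measurableSet_Icc, Real.volume_real_Icc,
    smul_eq_mul, mul_one]
  congr 1
  rcases le_total 0 t with ht | ht
  · rw [abs_of_nonneg ht, min_eq_left (by linarith), max_eq_right (by linarith)]; ring
  · rw [abs_of_nonpos ht, min_eq_right (by linarith), max_eq_left (by linarith)]; ring

lemma jb_pos (x : ℝ) : 0 < jb x := Real.sqrt_pos.2 (by positivity)

lemma abs_le_jb (x : ℝ) : |x| ≤ jb x := by
  rw [← Real.sqrt_sq_eq_abs]; exact Real.sqrt_le_sqrt (by linarith)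

lemma jb_le_one_add_abs (x : ℝ) : jb x ≤ 1 + |x| :=
  Real.sqrt_le_iff.2 ⟨by positivity, by nlinarith [abs_nonneg x, sq_abs x]⟩

lemma continuous_jb_rpow (r : ℝ) : Continuous fun x => jb x ^ r :=
  (Real.continuous_sqrt.comp (by fun_prop)).rpow_const fun x => Or.inl (jb_pos x).ne'

section Single

variable (k l : ℤ × ℤ) (f g : ℝ → ℂ)

lemma conjFT_single : conjFT (Pi.single k f) = Pi.single (-k) fun τ => starRingEnd ℂ (f (-τ)) := by
  funext n τ
  simp only [conjFT, Pi.single_apply, neg_eq_iff_eq_neg]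
  split_ifs <;> simp

lemma conv_single_single :
    conv (Pi.single k f) (Pi.single l g) = Pi.single (k + l) fun τ => ∫ τ₁, f τ₁ * g (τ - τ₁) := by
  funext n τ
  rw [conv, tsum_eq_single k fun n₁ hn₁ => by simp [Pi.single_apply, hn₁]]
  by_cases hn : n = k + l
  · simp [hn]
  · have : n - k ≠ l := fun h => hn (by rw [← h]; abel)
    simp [hn, this]

lemma Xnorm_single (s b : ℝ) :
    Xnorm s b (Pi.single k f) = jap k ^ s * √(∫ τ, (jb (τ + nsq k) ^ b * ‖f τ‖) ^ 2) := by
  have hjap : 0 ≤ jap k ^ s := Real.rpow_nonneg (Real.sqrt_nonneg _) s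
  rw [Xnorm, tsum_eq_single k fun n hn => by simp [hn]]
  simp only [Pi.single_eq_same, mul_assoc, mul_pow, integral_const_mul]
  rw [Real.sqrt_mul (sq_nonneg _), Real.sqrt_sq hjap]

end Single

noncomputable def timeProfile (N : ℕ) (τ : ℝ) : ℂ :=
  (((Icc (-1 : ℝ) 1).indicator (fun _ => (1 : ℝ)) (τ + (N : ℝ) ^ 2) : ℝ) : ℂ)

noncomputable def weightedBumpNorm (b : ℝ) : ℝ := √(∫ σ in (-1)..1, (jb σ ^ b) ^ 2)

lemma weightedBumpNorm_pos (b : ℝ) : 0 < weightedBumpNorm b :=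
  Real.sqrt_pos.2 <| intervalIntegral.intervalIntegral_pos_of_pos_on
    (((continuous_jb_rpow b).pow 2).intervalIntegrable _ _)
    (fun σ _ => pow_pos (Real.rpow_pos_of_pos (jb_pos σ) b) 2) (by norm_num)

lemma uN_eq_single (N : ℕ) : uN N = Pi.single ((N : ℤ), 0) (timeProfile N) := by
  funext n τ
  by_cases hn : n = ((N : ℤ), 0) <;> simp [uN, timeProfile, hn]

lemma vN_eq_single (N : ℕ) : vN N = Pi.single (-(N : ℤ), 0) (timeProfile N) := by
  funext n τ
  by_cases hn : n = (-(N : ℤ), 0) <;> simp [vN, timeProfile, hn]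

lemma conv_conjFT_uN_conjFT_vN (N : ℕ) :
    conv (conjFT (uN N)) (conjFT (vN N))
      = Pi.single 0 fun τ => ((max (2 - |2 * (N : ℝ) ^ 2 - τ|) 0 : ℝ) : ℂ) := by
  have hsum : -((N : ℤ), (0 : ℤ)) + -(-(N : ℤ), (0 : ℤ)) = 0 := by simp
  rw [uN_eq_single, vN_eq_single, conjFT_single, conjFT_single, conv_single_single, hsum]
  congr 1
  funext τ
  -- substituting `τ₁ = N² - x` exhibits the self-convolution of `1_{[-1,1]}` at `2N² - τ`
  simp only [timeProfile, Complex.conj_ofReal, ← Complex.ofReal_mul,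
    integral_complex_ofReal]
  congr 1
  rw [← integral_indicator_Icc_mul_indicator_Icc_sub,
    ← integral_sub_left_eq_self _ volume ((N : ℝ) ^ 2)]
  congr 1
  funext τ₁
  congr 2 <;> ring

lemma Xnorm_single_timeProfile (s b : ℝ) (N : ℕ) {k : ℤ} (hk : (k : ℝ) ^ 2 = (N : ℝ) ^ 2) :
    Xnorm s b (Pi.single (k, 0) (timeProfile N)) = √(1 + (N : ℝ) ^ 2) ^ s * weightedBumpNorm b := by
  set G : ℝ → ℝ :=
    fun σ => (jb σ ^ b * ‖(((Icc (-1 : ℝ) 1).indicator (fun _ => (1 : ℝ)) σ : ℝ) : ℂ)‖) ^ 2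
  have hG : G = (Icc (-1 : ℝ) 1).indicator (fun σ => (jb σ ^ b) ^ 2) := by
    funext σ
    by_cases hσ : σ ∈ Icc (-1 : ℝ) 1 <;> simp [G, hσ]
  have hjap : jap (k, 0) = √(1 + (N : ℝ) ^ 2) := by simp [jap, hk]
  have hnsq : nsq (k, 0) = (N : ℝ) ^ 2 := by simp [nsq, hk]
  rw [Xnorm_single, hjap, hnsq, weightedBumpNorm, intervalIntegral.integral_of_le (by norm_num),
    ← integral_Icc_eq_integral_Ioc, ← integral_indicator measurableSet_Icc, ← hG,
    ← integral_add_right_eq_self G ((N : ℝ) ^ 2)]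
  rfl

lemma Xnorm_uN (s b : ℝ) (N : ℕ) :
    Xnorm s b (uN N) = √(1 + (N : ℝ) ^ 2) ^ s * weightedBumpNorm b := by
  rw [uN_eq_single, Xnorm_single_timeProfile s b N rfl]

lemma Xnorm_vN (s b : ℝ) (N : ℕ) :
    Xnorm s b (vN N) = √(1 + (N : ℝ) ^ 2) ^ s * weightedBumpNorm b := by
  rw [vN_eq_single, Xnorm_single_timeProfile s b N (by push_cast; ring)]

lemma rpow_sqrt_one_add_sq_mem_Icc (s : ℝ) {x : ℝ} (hx : 1 ≤ x) :
    √(1 + x ^ 2) ^ s ∈ Icc (min 1 (2 ^ s) * x ^ s) (max 1 (2 ^ s) * x ^ s) :=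
  rpow_mem_Icc_of_le_of_le_mul s (by linarith) (by norm_num)
    (Real.le_sqrt_of_sq_le (by linarith))
    (Real.sqrt_le_iff.2 ⟨by linarith, by nlinarith⟩)

lemma indicator_le_norm_conv_conjFT_uN_conjFT_vN (N : ℕ) (n : ℤ × ℤ) (τ : ℝ) :
    (if n = (0, 0) then
        (Icc (-1 : ℝ) 1).indicator (fun _ => (1 : ℝ)) (-τ + 2 * (N : ℝ) ^ 2)
      else 0)
    ≤ ‖conv (conjFT (uN N)) (conjFT (vN N)) n τ‖ := by
  rw [conv_conjFT_uN_conjFT_vN]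
  by_cases hn : n = (0, 0)
  · have hτ : -τ + 2 * (N : ℝ) ^ 2 = 2 * (N : ℝ) ^ 2 - τ := by ring
    simp only [hn, if_true, Prod.mk_zero_zero, Pi.single_eq_same, hτ,
      Complex.norm_of_nonneg (le_max_right _ _), indicator_apply, mem_Icc, ← abs_le]
    split_ifs with h
    · exact le_max_of_le_left (by linarith)
    · exact le_max_right _ _
  · simp [hn]

lemma integrable_sq_jb_rpow_mul_tent (r T : ℝ) :
    Integrable fun τ => (jb τ ^ r * max (2 - |T - τ|) 0) ^ 2 := by
  refine (((continuous_jb_rpow r).mul (by fun_prop)).pow 2).integrable_of_hasCompactSupport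
    (HasCompactSupport.intro (isCompact_Icc (a := T - 2) (b := T + 2)) fun τ hτ => ?_)
  have : 2 ≤ |T - τ| := by
    rw [mem_Icc, not_and_or, not_le, not_le] at hτ
    rcases hτ with h | h
    · rw [abs_of_pos (by linarith)]; linarith
    · rw [abs_of_neg (by linarith)]; linarith
  simp [max_eq_right (by linarith : 2 - |T - τ| ≤ 0)]

lemma rpow_le_jb_rpow_of_abs_sub_le (r : ℝ) {x τ : ℝ} (hx : 1 ≤ x)
    (hτ : |2 * x ^ 2 - τ| ≤ 1) : min 1 ((4 : ℝ) ^ r) * x ^ (2 * r) ≤ jb τ ^ r := by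
  have hx2 : 1 ≤ x ^ 2 := one_le_pow₀ hx
  obtain ⟨hτ_lo, hτ_hi⟩ := abs_le.1 hτ
  have hjb_lo : x ^ 2 ≤ jb τ := by linarith [le_abs_self τ, abs_le_jb τ]
  have hjb_hi : jb τ ≤ 4 * x ^ 2 := by
    have : |τ| ≤ 2 * x ^ 2 + 1 := abs_le.2 ⟨by linarith, by linarith⟩
    linarith [jb_le_one_add_abs τ]
  have hpow : (x ^ 2) ^ r = x ^ (2 * r) := by
    rw [← Real.rpow_natCast, ← Real.rpow_mul (by linarith)]; norm_num
  rw [← hpow]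
  exact (rpow_mem_Icc_of_le_of_le_mul r (by positivity) (by norm_num) hjb_lo hjb_hi).1

lemma Xnorm_conv_conjFT_uN_conjFT_vN_ge (s b : ℝ) {N : ℕ} (hN : 1 ≤ N) :
    min 1 ((4 : ℝ) ^ (b - 1)) * (N : ℝ) ^ (2 * b - 2)
      ≤ Xnorm s (b - 1) (conv (conjFT (uN N)) (conjFT (vN N))) := by
  set T := 2 * (N : ℝ) ^ 2
  set m := min 1 ((4 : ℝ) ^ (b - 1)) * (N : ℝ) ^ (2 * b - 2)
  have hg_ge : ∀ τ, (Icc (T - 1) (T + 1)).indicator (fun _ => m ^ 2) τ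
      ≤ (jb τ ^ (b - 1) * max (2 - |T - τ|) 0) ^ 2 := by
    intro τ
    by_cases hτ : τ ∈ Icc (T - 1) (T + 1)
    · rw [indicator_of_mem hτ]
      have habs : |T - τ| ≤ 1 := abs_le.2 ⟨by linarith [hτ.2], by linarith [hτ.1]⟩
      have hjb : m ≤ jb τ ^ (b - 1) := by
        have := rpow_le_jb_rpow_of_abs_sub_le (b - 1) (by exact_mod_cast hN : (1 : ℝ) ≤ N) habs
        rwa [show 2 * (b - 1) = 2 * b - 2 by ring] at this
      gcongr
      exact hjb.trans (le_mul_of_one_le_right (Real.rpow_nonneg (jb_pos τ).le _)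
        (le_max_of_le_left (by linarith)))
    · rw [indicator_of_notMem hτ]
      positivity
  have hint := integral_mono ((integrable_indicator_iff measurableSet_Icc).2
    (integrableOn_const measure_Icc_lt_top.ne enorm_ne_top))
    (integrable_sq_jb_rpow_mul_tent (b - 1) T) hg_ge
  rw [integral_indicator_const _ measurableSet_Icc, Real.volume_real_Icc, smul_eq_mul,
    show T + 1 - (T - 1) = 2 by ring, max_eq_left zero_le_two] at hint
  have hjap : jap 0 = 1 := by simp [jap]
  have hnsq : nsq 0 = 0 := by simp [nsq]
  rw [conv_conjFT_uN_conjFT_vN, Xnorm_single, hjap, hnsq, Real.one_rpow, one_mul]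
  simp_rw [add_zero, Complex.norm_of_nonneg (le_max_right _ _)]
  exact Real.le_sqrt_of_sq_le (by nlinarith [sq_nonneg m])

/-- the Example 1 computations: `𝓕(ū_N v̄_N)(n,τ) ≥ 1_{n=0}1_{[-1,1]}(-τ+2N²)`
pointwise, `‖⟨n⟩^s⟨τ+|n|²⟩^{b-1}𝓕(ū_N v̄_N)‖ ≳ N^{2b-2}`, and
`‖u_N‖_{X^{s,b}} ∼ ‖v_N‖_{X^{s,b}} ∼ N^s`. -/
theorem stmt3 (s b : ℝ) :
    ∃ c C : ℝ, 0 < c ∧ 0 < C ∧ ∀ N : ℕ, 1 ≤ N →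
      (∀ (n : ℤ × ℤ) (τ : ℝ),
        (if n = (0, 0) then
            Set.indicator (Set.Icc (-1 : ℝ) 1) (fun _ => (1 : ℝ)) (-τ + 2 * (N : ℝ) ^ 2)
          else 0)
        ≤ ‖conv (conjFT (uN N)) (conjFT (vN N)) n τ‖)
      ∧ c * (N : ℝ) ^ (2 * b - 2) ≤ Xnorm s (b - 1) (conv (conjFT (uN N)) (conjFT (vN N)))
      ∧ c * (N : ℝ) ^ s ≤ Xnorm s b (uN N) ∧ Xnorm s b (uN N) ≤ C * (N : ℝ) ^ s
      ∧ c * (N : ℝ) ^ s ≤ Xnorm s b (vN N) ∧ Xnorm s b (vN N) ≤ C * (N : ℝ) ^ s := by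
  have hK := weightedBumpNorm_pos b
  refine ⟨min (min 1 ((2 : ℝ) ^ s) * weightedBumpNorm b) (min 1 ((4 : ℝ) ^ (b - 1))),
    max 1 ((2 : ℝ) ^ s) * weightedBumpNorm b, by positivity, by positivity, fun N hN => ?_⟩
  have hN1 : (1 : ℝ) ≤ N := by exact_mod_cast hN
  obtain ⟨hlo, hhi⟩ := rpow_sqrt_one_add_sq_mem_Icc s hN1
  have hlower : min (min 1 ((2 : ℝ) ^ s) * weightedBumpNorm b) (min 1 ((4 : ℝ) ^ (b - 1)))
      * (N : ℝ) ^ s ≤ √(1 + (N : ℝ) ^ 2) ^ s * weightedBumpNorm b := by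
    calc _ ≤ min 1 ((2 : ℝ) ^ s) * weightedBumpNorm b * (N : ℝ) ^ s :=
          mul_le_mul_of_nonneg_right (min_le_left _ _) (by positivity)
      _ ≤ √(1 + (N : ℝ) ^ 2) ^ s * weightedBumpNorm b := by nlinarith
  have hupper : √(1 + (N : ℝ) ^ 2) ^ s * weightedBumpNorm b
      ≤ max 1 ((2 : ℝ) ^ s) * weightedBumpNorm b * (N : ℝ) ^ s := by nlinarith
  rw [Xnorm_uN, Xnorm_vN]
  refine ⟨indicator_le_norm_conv_conjFT_uN_conjFT_vN N, ?_, hlower, hupper, hlower, hupper⟩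
  calc _ ≤ min 1 ((4 : ℝ) ^ (b - 1)) * (N : ℝ) ^ (2 * b - 2) :=
        mul_le_mul_of_nonneg_right (min_le_right _ _) (by positivity)
    _ ≤ _ := Xnorm_conv_conjFT_uN_conjFT_vN_ge s b hN
end

section
/- (Frequency separation forces high modulation) Suppose n, n₁, n₂ ∈ ℤ² with n + n₁ + n₂ = 0 and n ≠ 0, and τ, τ₁, τ₂ ∈ ℝ with τ + τ₁ + τ₂ = 0. If |τ + |n|²| < 2^{-10}|n|² and |τ₁ + |n₁|²| < 2^{-10}|n₁|², then τ₂ > |n|²/2, and consequently |τ₂ + |n₂|²| ≥ |n₂|² and |τ₂ + |n₂|²| ≥ |n|²/2. -/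
/-!
Each modulation hypothesis puts `-τ` within a factor `1 ± 2⁻¹⁰` of `|n|²`, and likewise `-τ₁`
of `|n₁|²`. Hence `τ₂ = -τ - τ₁ > (1 - 2⁻¹⁰)(|n|² + |n₁|²) > |n|²/2`; in particular `τ₂ > 0`,
so `τ₂ + |n₂|²` is its own absolute value and dominates both `τ₂` and `|n₂|²`.
-/

lemma nsq_nonneg (n : ℤ × ℤ) : 0 ≤ nsq n := by
  unfold nsq
  positivity

lemma mul_sub_lt_neg_of_abs_add_lt {τ a ε : ℝ} (h : |τ + a| < ε * a) : (1 - ε) * a < -τ := by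
  linarith [(abs_lt.mp h).2]

lemma half_lt_neg_add_of_abs_add_lt {τ τ₁ a a₁ ε : ℝ} (hε : ε < 1 / 2) (ha : 0 ≤ a)
    (ha₁ : 0 ≤ a₁) (h : |τ + a| < ε * a) (h₁ : |τ₁ + a₁| < ε * a₁) : a / 2 < -(τ + τ₁) := by
  have ha_pos : 0 < a := by
    refine lt_of_le_of_ne ha ?_
    rintro rfl
    simp only [add_zero, mul_zero] at h
    exact (abs_nonneg τ).not_gt h
  have hgain : 0 < (1 / 2 - ε) * a := mul_pos (by linarith) ha_pos
  have hrest : 0 ≤ (1 - ε) * a₁ := mul_nonneg (by linarith) ha₁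
  linarith [mul_sub_lt_neg_of_abs_add_lt h, mul_sub_lt_neg_of_abs_add_lt h₁]

theorem stmt9_general (n n₁ n₂ : ℤ × ℤ)
    (τ τ₁ τ₂ : ℝ) (hτ : τ + τ₁ + τ₂ = 0)
    (h1 : |τ + nsq n| < (2 : ℝ) ^ (-10 : ℤ) * nsq n)
    (h2 : |τ₁ + nsq n₁| < (2 : ℝ) ^ (-10 : ℤ) * nsq n₁) :
    nsq n / 2 < τ₂ ∧ nsq n₂ ≤ |τ₂ + nsq n₂| ∧ nsq n / 2 ≤ |τ₂ + nsq n₂| := by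
  have hε : (2 : ℝ) ^ (-10 : ℤ) < 1 / 2 := by norm_num
  have hτ₂ : nsq n / 2 < τ₂ := by
    linarith [half_lt_neg_add_of_abs_add_lt hε (nsq_nonneg n) (nsq_nonneg n₁) h1 h2]
  have habs : |τ₂ + nsq n₂| = τ₂ + nsq n₂ :=
    abs_of_pos (by linarith [nsq_nonneg n, nsq_nonneg n₂])
  refine ⟨hτ₂, ?_, ?_⟩ <;> rw [habs] <;> linarith [nsq_nonneg n, nsq_nonneg n₂]

/-- frequency separation forces high modulation for the nonlinearity `ū²`. -/
theorem stmt9 (n n₁ n₂ : ℤ × ℤ) (hn : n + n₁ + n₂ = 0) (hne : n ≠ 0)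
    (τ τ₁ τ₂ : ℝ) (hτ : τ + τ₁ + τ₂ = 0)
    (h1 : |τ + nsq n| < (2 : ℝ) ^ (-10 : ℤ) * nsq n)
    (h2 : |τ₁ + nsq n₁| < (2 : ℝ) ^ (-10 : ℤ) * nsq n₁) :
    nsq n / 2 < τ₂ ∧ nsq n₂ ≤ |τ₂ + nsq n₂| ∧ nsq n / 2 ≤ |τ₂ + nsq n₂| :=
  stmt9_general n n₁ n₂ τ τ₁ τ₂ hτ h1 h2
end
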